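/- arXiv:1502.01956 — 3 statements merged into one kernel-verified Lean document; each statement's English description precedes it below -/
import Mathlib

section
/- Let g : ℝ^d × ℝ^k → Set(ℝ^k) be upper semi-continuous with compact nonempty values and satisfy the linear growth bound sup_{z ∈ g(x,y)} ‖z‖ ≤ K(1 + ‖x‖ + ‖y‖), and let λ : ℝ^k → Set(ℝ^d) be upper semi-continuous with compact nonempty values satisfying sup_{x ∈ λ(y)} ‖x‖ ≤ K(1 + ‖y‖). Define G(y) := closed convex hull of ⋃_{x ∈ λ(y)} g(x,y). Then G is upper semi-continuous: if yₙ → y, zₙ ∈ G(yₙ) for all n, and zₙ → z, then z ∈ G(y). -/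
open Filter Topology

theorem stmt_2 {d k : ℕ}
    (g : EuclideanSpace ℝ (Fin d) × EuclideanSpace ℝ (Fin k) →
      Set (EuclideanSpace ℝ (Fin k)))
    (lam : EuclideanSpace ℝ (Fin k) → Set (EuclideanSpace ℝ (Fin d)))
    (hg_ne : ∀ p, (g p).Nonempty) (hg_cpt : ∀ p, IsCompact (g p))
    (hg_usc : ∀ (p : ℕ → EuclideanSpace ℝ (Fin d) × EuclideanSpace ℝ (Fin k))
      (w : ℕ → EuclideanSpace ℝ (Fin k)) (p₀ : _) (w₀ : _),
      Tendsto p atTop (𝓝 p₀) → Tendsto w atTop (𝓝 w₀) →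
      (∀ m, w m ∈ g (p m)) → w₀ ∈ g p₀)
    (hlam_ne : ∀ y, (lam y).Nonempty) (hlam_cpt : ∀ y, IsCompact (lam y))
    (hlam_usc : ∀ (y : ℕ → EuclideanSpace ℝ (Fin k))
      (x : ℕ → EuclideanSpace ℝ (Fin d)) (y₀ : _) (x₀ : _),
      Tendsto y atTop (𝓝 y₀) → Tendsto x atTop (𝓝 x₀) →
      (∀ m, x m ∈ lam (y m)) → x₀ ∈ lam y₀)
    (K : ℝ) (hK : 0 < K)
    (hg_bd : ∀ x y, ∀ z ∈ g (x, y), ‖z‖ ≤ K * (1 + ‖x‖ + ‖y‖))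
    (hlam_bd : ∀ y, ∀ x ∈ lam y, ‖x‖ ≤ K * (1 + ‖y‖))
    (G : EuclideanSpace ℝ (Fin k) → Set (EuclideanSpace ℝ (Fin k)))
    (hG : ∀ y, G y = closure (convexHull ℝ (⋃ x ∈ lam y, g (x, y))))
    (y : ℕ → EuclideanSpace ℝ (Fin k)) (y₀ : EuclideanSpace ℝ (Fin k))
    (z : ℕ → EuclideanSpace ℝ (Fin k)) (z₀ : EuclideanSpace ℝ (Fin k))
    (hy : Tendsto y atTop (𝓝 y₀)) (hz : Tendsto z atTop (𝓝 z₀))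
    (hzmem : ∀ m, z m ∈ G (y m)) :
    z₀ ∈ G y₀ := by
  set S : Set (EuclideanSpace ℝ (Fin k)) := ⋃ x ∈ lam y₀, g (x, y₀) with hSdef
  have hSsub : S ⊆ G y₀ := by
    rw [hG]
    exact (subset_convexHull ℝ _).trans subset_closure
  -- bound on y
  obtain ⟨M, hM⟩ : ∃ M, ∀ n, ‖y n‖ ≤ M := by
    obtain ⟨M, hM⟩ := (hy.norm).bddAbove_range
    exact ⟨M, fun n => hM ⟨n, rfl⟩⟩
  -- key: eventually F(y n) ⊆ Metric.thickening ε S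
  have key : ∀ ε > (0:ℝ), ∀ᶠ n in atTop,
      (⋃ x ∈ lam (y n), g (x, y n)) ⊆ Metric.thickening ε S := by
    intro ε hε
    by_contra hcon
    rw [Filter.not_eventually] at hcon
    have hcon' : ∃ᶠ n in atTop, ∃ w, w ∈ (⋃ x ∈ lam (y n), g (x, y n)) ∧
        w ∉ Metric.thickening ε S := by
      refine hcon.mono fun n hn => ?_
      rw [Set.not_subset] at hn
      exact hn
    obtain ⟨φ, hφ, hφ2⟩ := Filter.extraction_of_frequently_atTop hcon'
    choose w hw hw2 using hφ2
    choose x hx hwx using fun j => Set.mem_iUnion₂.mp (hw j)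
    -- x j bounded
    have hxb : ∀ j, x j ∈ Metric.closedBall (0 : EuclideanSpace ℝ (Fin d)) (K * (1 + M)) := by
      intro j
      rw [mem_closedBall_zero_iff]
      calc ‖x j‖ ≤ K * (1 + ‖y (φ j)‖) := hlam_bd _ _ (hx j)
        _ ≤ K * (1 + M) := by nlinarith [hM (φ j), hK.le]
    obtain ⟨x₀, -, ψ, hψ, hxψ⟩ := (isCompact_closedBall _ _).tendsto_subseq hxb
    have hwb : ∀ j, w (ψ j) ∈ Metric.closedBall (0 : EuclideanSpace ℝ (Fin k))
        (K * (1 + K * (1 + M) + M)) := by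
      intro j
      rw [mem_closedBall_zero_iff]
      have h1 := hg_bd (x (ψ j)) (y (φ (ψ j))) _ (hwx (ψ j))
      have h2 := (mem_closedBall_zero_iff).mp (hxb (ψ j))
      have h3 := hM (φ (ψ j))
      nlinarith [hK.le]
    obtain ⟨w₀, -, χ, hχ, hwχ⟩ := (isCompact_closedBall _ _).tendsto_subseq hwb
    have hyt : Tendsto (fun j => y (φ (ψ (χ j)))) atTop (𝓝 y₀) :=
      hy.comp ((hφ.comp (hψ.comp hχ)).tendsto_atTop)
    have hxt : Tendsto (fun j => x (ψ (χ j))) atTop (𝓝 x₀) :=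
      hxψ.comp (hχ.tendsto_atTop)
    have hwt : Tendsto (fun j => w (ψ (χ j))) atTop (𝓝 w₀) := hwχ
    have hx₀ : x₀ ∈ lam y₀ :=
      hlam_usc _ _ _ _ hyt hxt (fun j => hx (ψ (χ j)))
    have hw₀ : w₀ ∈ g (x₀, y₀) := by
      refine hg_usc (fun j => (x (ψ (χ j)), y (φ (ψ (χ j))))) _ (x₀, y₀) w₀ ?_ hwt
        (fun j => hwx (ψ (χ j)))
      exact hxt.prodMk_nhds hyt
    have hw₀S : w₀ ∈ S := Set.mem_iUnion₂.mpr ⟨x₀, hx₀, hw₀⟩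
    -- contradiction: w (ψ (χ j)) gets within ε of w₀ ∈ S
    have : ∀ᶠ j in atTop, dist (w (ψ (χ j))) w₀ < ε :=
      hwt (Metric.ball_mem_nhds _ hε)
    obtain ⟨j, hj⟩ := this.exists
    exact hw2 (ψ (χ j)) (Metric.mem_thickening_iff.mpr ⟨w₀, hw₀S, hj⟩)
  -- conclude: z₀ ∈ Metric.cthickening ε (G y₀) for all ε > 0
  have hconv : Convex ℝ (G y₀) := by
    rw [hG]; exact (convex_convexHull ℝ _).closure
  have hcth : ∀ ε > (0:ℝ), z₀ ∈ Metric.cthickening ε (G y₀) := by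
    intro ε hε
    have hev : ∀ᶠ n in atTop, z n ∈ Metric.cthickening ε (G y₀) := by
      refine (key ε hε).mono fun n hn => ?_
      have hsub : (⋃ x ∈ lam (y n), g (x, y n)) ⊆ Metric.cthickening ε (G y₀) :=
        hn.trans ((Metric.thickening_subset_of_subset ε hSsub).trans
          (Metric.thickening_subset_cthickening ε _))
      have : G (y n) ⊆ Metric.cthickening ε (G y₀) := by
        rw [hG]
        exact closure_minimal (convexHull_min hsub (hconv.cthickening ε))
          (Metric.isClosed_cthickening)
      exact this (hzmem n)
    exact (Metric.isClosed_cthickening).mem_of_tendsto hz hev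
  have hGc : IsClosed (G y₀) := by rw [hG]; exact isClosed_closure
  have : z₀ ∈ closure (G y₀) := by
    rw [Metric.closure_eq_iInter_cthickening]
    exact Set.mem_iInter₂.mpr fun ε hε => hcth ε hε
  rwa [hGc.closure_eq] at this
end

section
/- Let u : [0,∞) → ℝ^d be a piecewise constant function defined by u(t) = uₙ for t ∈ [tₙ, tₙ₊₁), where t₀ = 0, tₙ = Σ_{i<n} a(i), and let xₙ₊₁ = xₙ + a(n)(uₙ + Mₙ₊₁) with partial noise sums ζₙ = Σ_{m<n} a(m)M_{m+1}. Let x̄ be the piecewise linear interpolation of (xₙ) on the grid (tₙ), and for s ≥ 0 let x^s(t) := x̄(s) + ∫₀ᵗ u(s+z) dz. If (ζₙ) converges, then for every T > 0, sup_{t∈[0,T]} ‖x̄(s+t) − x^s(t)‖ → 0 as s → ∞. -/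
/-!
Write `ζ n = ∑ m < n, a m • M (m + 1)` for the partial noise sums. On every grid cell
`[t n, t (n + 1)]` the gap `D r = xbar r - x 0 - ∫ z in 0..r, u z` between the interpolated
iterates and the integrated drift is the linear interpolation of `ζ n` and `ζ (n + 1)`, because
`u` is constant there. As `t n → ∞`, `D` converges together with `ζ`, so it is Cauchy; and
`xbar (s + τ) - (xbar s + ∫ z in 0..τ, u (s + z)) = D (s + τ) - D s`.
-/

open Filter Topology Set MeasureTheory

section Grid

variable {t : ℕ → ℝ}

lemma exists_mem_Icc_succ_of_tendsto_atTop (hmono : Monotone t) (htop : Tendsto t atTop atTop)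
    {N : ℕ} {r : ℝ} (hr : t N ≤ r) : ∃ n ≥ N, r ∈ Icc (t n) (t (n + 1)) := by
  have hex : ∃ k, r < t k := (htop.eventually_gt_atTop r).exists
  have hN : N < Nat.find hex := by
    by_contra! h
    exact (Nat.find_spec hex).not_ge ((hmono h).trans hr)
  obtain ⟨n, hn⟩ : ∃ n, Nat.find hex = n + 1 := Nat.exists_eq_succ_of_ne_zero (by omega)
  refine ⟨n, by omega, not_lt.1 (Nat.find_min hex (by omega)), ?_⟩
  exact (hn ▸ Nat.find_spec hex).le

lemma tendsto_of_mem_segment_grid {E : Type*} [NormedAddCommGroup E] [NormedSpace ℝ E]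
    {ζ : ℕ → E} {D : ℝ → E} {L : E} (hmono : Monotone t) (htop : Tendsto t atTop atTop)
    (hζ : Tendsto ζ atTop (𝓝 L))
    (hD : ∀ n, ∀ r ∈ Icc (t n) (t (n + 1)), D r ∈ segment ℝ (ζ n) (ζ (n + 1))) :
    Tendsto D atTop (𝓝 L) := by
  rw [Metric.tendsto_atTop] at hζ ⊢
  intro ε hε
  obtain ⟨N, hN⟩ := hζ ε hε
  refine ⟨t N, fun r hr => ?_⟩
  obtain ⟨n, hnN, hn⟩ := exists_mem_Icc_succ_of_tendsto_atTop hmono htop hr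
  exact (convex_ball L ε).segment_subset (hN n hnN) (hN (n + 1) (by omega)) (hD n r hn)

end Grid

section PiecewiseConstant

variable {E : Type*} [NormedAddCommGroup E] [NormedSpace ℝ E] [CompleteSpace E]
  {u : ℝ → E}

lemma intervalIntegrable_and_integral_eq_of_eqOn_Ioo {c : E} {α β : ℝ} (hαβ : α ≤ β)
    (hu : EqOn u (fun _ => c) (Ioo α β)) :
    IntervalIntegrable u volume α β ∧ ∫ z in α..β, u z = (β - α) • c := by
  have hu' : EqOn u (fun _ => c) (uIoo α β) := uIoo_of_le hαβ ▸ hu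
  exact ⟨(intervalIntegrable_congr_uIoo hu').2 intervalIntegrable_const,
    (intervalIntegral.integral_congr_uIoo hu').trans (intervalIntegral.integral_const c)⟩

variable {t : ℕ → ℝ} {c : ℕ → E}

lemma intervalIntegrable_and_integral_eq_of_eqOn_Ico_grid (hmono : Monotone t)
    (hu : ∀ n, EqOn u (fun _ => c n) (Ico (t n) (t (n + 1)))) {n : ℕ} {r : ℝ}
    (hr : r ∈ Icc (t n) (t (n + 1))) :
    IntervalIntegrable u volume (t 0) r ∧
      ∫ z in (t 0)..r, u z =
        ∑ m ∈ Finset.range n, (t (m + 1) - t m) • c m + (r - t n) • c n := by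
  have hcell : ∀ m, IntervalIntegrable u volume (t m) (t (m + 1)) ∧
      ∫ z in (t m)..(t (m + 1)), u z = (t (m + 1) - t m) • c m := fun m =>
    intervalIntegrable_and_integral_eq_of_eqOn_Ioo (hmono m.le_succ)
      ((hu m).mono Ioo_subset_Ico_self)
  have hlast := intervalIntegrable_and_integral_eq_of_eqOn_Ioo hr.1
    ((hu n).mono (Ioo_subset_Ico_self.trans (Ico_subset_Ico_right hr.2)))
  have hinit : IntervalIntegrable u volume (t 0) (t n) :=
    IntervalIntegrable.trans_iterate fun m _ => (hcell m).1
  refine ⟨hinit.trans hlast.1, ?_⟩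
  rw [← intervalIntegral.integral_add_adjacent_intervals hinit hlast.1, hlast.2,
    ← intervalIntegral.sum_integral_adjacent_intervals fun m _ => (hcell m).1]
  simp only [fun m => (hcell m).2]

lemma intervalIntegrable_of_eqOn_Ico_grid (hmono : Monotone t) (htop : Tendsto t atTop atTop)
    (hu : ∀ n, EqOn u (fun _ => c n) (Ico (t n) (t (n + 1)))) {r : ℝ} (hr : t 0 ≤ r) :
    IntervalIntegrable u volume (t 0) r := by
  obtain ⟨n, -, hn⟩ := exists_mem_Icc_succ_of_tendsto_atTop hmono htop hr
  exact (intervalIntegrable_and_integral_eq_of_eqOn_Ico_grid hmono hu hn).1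

end PiecewiseConstant

section StochasticApproximation

variable {E : Type*} [NormedAddCommGroup E] [NormedSpace ℝ E] [CompleteSpace E]
  {a t : ℕ → ℝ} {useq M x : ℕ → E} {u xbar : ℝ → E}

lemma sub_sub_integral_eq_lineMap (ha : ∀ n, 0 < a n) (ht : ∀ n, t (n + 1) = t n + a n)
    (hu : ∀ n, ∀ s ∈ Ico (t n) (t (n + 1)), u s = useq n)
    (hx : ∀ n, x (n + 1) = x n + a n • (useq n + M (n + 1)))
    (hxbar : ∀ n, ∀ s ∈ Icc (t n) (t (n + 1)),
      xbar s = x n + ((s - t n) / a n) • (x (n + 1) - x n))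
    {n : ℕ} {r : ℝ} (hr : r ∈ Icc (t n) (t (n + 1))) :
    xbar r - x 0 - ∫ z in (t 0)..r, u z =
      AffineMap.lineMap (∑ m ∈ Finset.range n, a m • M (m + 1))
        (∑ m ∈ Finset.range (n + 1), a m • M (m + 1)) ((r - t n) / a n) := by
  have hmono : Monotone t := monotone_nat_of_le_succ fun n => by linarith [ht n, ha n]
  have hint := (intervalIntegrable_and_integral_eq_of_eqOn_Ico_grid hmono hu hr).2
  have hxn : x n = x 0 + ∑ m ∈ Finset.range n, (a m • useq m + a m • M (m + 1)) := by
    refine eq_add_of_sub_eq' ?_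
    rw [← Finset.sum_range_sub]
    exact Finset.sum_congr rfl fun m _ => by rw [hx m, smul_add]; abel
  set c := (r - t n) / a n
  have hr' : r - t n = c * a n := (div_mul_cancel₀ _ (ha n).ne').symm
  simp only [ht, add_sub_cancel_left, hr', mul_smul] at hint
  rw [hxbar n r hr, hint, hx n, add_sub_cancel_left, AffineMap.lineMap_apply_module',
    Finset.sum_range_succ, add_sub_cancel_left, hxn, Finset.sum_add_distrib]
  simp only [smul_add]
  abel

lemma sub_sub_integral_mem_segment (ha : ∀ n, 0 < a n) (ht : ∀ n, t (n + 1) = t n + a n)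
    (hu : ∀ n, ∀ s ∈ Ico (t n) (t (n + 1)), u s = useq n)
    (hx : ∀ n, x (n + 1) = x n + a n • (useq n + M (n + 1)))
    (hxbar : ∀ n, ∀ s ∈ Icc (t n) (t (n + 1)),
      xbar s = x n + ((s - t n) / a n) • (x (n + 1) - x n))
    {n : ℕ} {r : ℝ} (hr : r ∈ Icc (t n) (t (n + 1))) :
    xbar r - x 0 - ∫ z in (t 0)..r, u z ∈
      segment ℝ (∑ m ∈ Finset.range n, a m • M (m + 1))
        (∑ m ∈ Finset.range (n + 1), a m • M (m + 1)) := by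
  rw [sub_sub_integral_eq_lineMap ha ht hu hx hxbar hr]
  refine lineMap_mem_segment ℝ _ _ ⟨div_nonneg (by linarith [hr.1]) (ha n).le, ?_⟩
  exact (div_le_one (ha n)).2 (by linarith [hr.2, ht n])

end StochasticApproximation

theorem stmt_9_general {d : ℕ}
    (a : ℕ → ℝ) (ha_pos : ∀ n, 0 < a n)
    (ha_div : Tendsto (fun n => ∑ i ∈ Finset.range n, a i) atTop atTop)
    (t : ℕ → ℝ) (ht : ∀ n, t n = ∑ i ∈ Finset.range n, a i)
    (useq : ℕ → EuclideanSpace ℝ (Fin d))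
    (u : ℝ → EuclideanSpace ℝ (Fin d))
    (hu : ∀ n, ∀ s ∈ Ico (t n) (t (n + 1)), u s = useq n)
    (M : ℕ → EuclideanSpace ℝ (Fin d))
    (x : ℕ → EuclideanSpace ℝ (Fin d))
    (hx : ∀ n, x (n + 1) = x n + a n • (useq n + M (n + 1)))
    (hζ : ∃ L, Tendsto (fun n => ∑ m ∈ Finset.range n, a m • M (m + 1))
      atTop (𝓝 L))
    (xbar : ℝ → EuclideanSpace ℝ (Fin d))
    (hxbar_lin : ∀ n, ∀ s ∈ Icc (t n) (t (n + 1)),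
      xbar s = x n + ((s - t n) / a n) • (x (n + 1) - x n)) :
    ∀ T > (0:ℝ), ∀ ε > (0:ℝ), ∃ S : ℝ, ∀ s ≥ S, ∀ τ ∈ Icc (0:ℝ) T,
      ‖xbar (s + τ) - (xbar s + ∫ z in (0:ℝ)..τ, u (s + z))‖ < ε := by
  intro T _ ε hε
  obtain ⟨L, hL⟩ := hζ
  have ht0 : t 0 = 0 := by simp [ht]
  have ht_succ : ∀ n, t (n + 1) = t n + a n := fun n => by simp [ht, Finset.sum_range_succ]
  have ht_mono : Monotone t := monotone_nat_of_le_succ fun n => by linarith [ht_succ n, ha_pos n]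
  have ht_top : Tendsto t atTop atTop := funext ht ▸ ha_div
  have hint : ∀ r ≥ (0 : ℝ), IntervalIntegrable u volume 0 r := fun r hr =>
    ht0 ▸ intervalIntegrable_of_eqOn_Ico_grid ht_mono ht_top hu (ht0 ▸ hr)
  set D : ℝ → EuclideanSpace ℝ (Fin d) := fun r => xbar r - x 0 - ∫ z in (0:ℝ)..r, u z
  have hD : Tendsto D atTop (𝓝 L) :=
    tendsto_of_mem_segment_grid ht_mono ht_top hL fun n r hr => by
      simpa only [D, ht0] using sub_sub_integral_mem_segment ha_pos ht_succ hu hx hxbar_lin hr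
  obtain ⟨S, hS⟩ := Metric.cauchySeq_iff.1 hD.cauchySeq ε hε
  refine ⟨max S 0, fun s hs τ hτ => ?_⟩
  have hs0 : 0 ≤ s := le_of_max_le_right hs
  have hshift : ∫ z in (0:ℝ)..τ, u (s + z) =
      (∫ z in (0:ℝ)..(s + τ), u z) - ∫ z in (0:ℝ)..s, u z := by
    rw [intervalIntegral.integral_comp_add_left, add_zero,
      intervalIntegral.integral_interval_sub_left (hint _ (by linarith [hτ.1])) (hint s hs0)]
  rw [hshift, show xbar (s + τ) - (xbar s + _) = D (s + τ) - D s by simp only [D]; abel,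
    ← dist_eq_norm]
  exact hS _ (by linarith [le_of_max_le_left hs, hτ.1]) _ (le_of_max_le_left hs)

theorem stmt_9 {d : ℕ}
    (a : ℕ → ℝ) (ha_pos : ∀ n, 0 < a n) (ha_le : ∀ n, a n ≤ 1)
    (ha_div : Tendsto (fun n => ∑ i ∈ Finset.range n, a i) atTop atTop)
    (t : ℕ → ℝ) (ht : ∀ n, t n = ∑ i ∈ Finset.range n, a i)
    (useq : ℕ → EuclideanSpace ℝ (Fin d))
    (u : ℝ → EuclideanSpace ℝ (Fin d))
    (hu : ∀ n, ∀ s ∈ Ico (t n) (t (n + 1)), u s = useq n)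
    (M : ℕ → EuclideanSpace ℝ (Fin d))
    (x : ℕ → EuclideanSpace ℝ (Fin d))
    (hx : ∀ n, x (n + 1) = x n + a n • (useq n + M (n + 1)))
    (hζ : ∃ L, Tendsto (fun n => ∑ m ∈ Finset.range n, a m • M (m + 1))
      atTop (𝓝 L))
    (xbar : ℝ → EuclideanSpace ℝ (Fin d))
    (hxbar_grid : ∀ n, xbar (t n) = x n)
    (hxbar_lin : ∀ n, ∀ s ∈ Icc (t n) (t (n + 1)),
      xbar s = x n + ((s - t n) / a n) • (x (n + 1) - x n)) :
    ∀ T > (0:ℝ), ∀ ε > (0:ℝ), ∃ S : ℝ, ∀ s ≥ S, ∀ τ ∈ Icc (0:ℝ) T,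
      ‖xbar (s + τ) - (xbar s + ∫ z in (0:ℝ)..τ, u (s + z))‖ < ε :=
  stmt_9_general a ha_pos ha_div t ht useq u hu M x hx hζ xbar hxbar_lin
end

section
/- Let h : ℝ^d × ℝ^k → Set(ℝ^d) be upper semi-continuous with nonempty compact convex values. Let (u_j) be a bounded sequence in ℝ^d with u_j ∈ h(x_j, y_j), where x_j → x₀ and y_j → y₀. If the Cesàro-type averages (1/N_m) Σ_{j=1}^{N_m} u_j converge to some u as m → ∞, then u ∈ h(x₀, y₀). -/
open Filter Topology Finset Metric Bornology

/-!
Write `K = h (x₀, y₀)`. By Bolzano–Weierstrass, every subsequence of the bounded sequence `u` has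
a further subsequence converging to some `w`, and the closed graph of `h` forces `w ∈ K`; hence
`K` is nonempty and `infDist (u j) K → 0`. Choosing nearest points `v j ∈ K`, the differences
`u j - v j` tend to `0`, so their Cesàro averages do too, and the averages of `u` and of `v` have the
same limit `u₀`. The averages of `v` are convex combinations of points of the closed convex set `K`.
-/

theorem Filter.Tendsto.cesaro_smul_Icc {E : Type*} [NormedAddCommGroup E] [NormedSpace ℝ E]
    {u : ℕ → E} {l : E} (h : Tendsto u atTop (𝓝 l)) :
    Tendsto (fun n : ℕ => (1 / (n : ℝ)) • ∑ i ∈ Icc 1 n, u i) atTop (𝓝 l) := by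
  have hshift := (h.comp (tendsto_add_atTop_nat 1)).cesaro_smul
  refine hshift.congr fun n => ?_
  rw [one_div, ← Ico_add_one_right_eq_Icc, sum_Ico_eq_sum_range, Nat.add_sub_cancel]
  simp only [Function.comp_apply, add_comm]

theorem Convex.inv_card_smul_sum_mem {R E ι : Type*} [Field R] [LinearOrder R]
    [IsStrictOrderedRing R] [AddCommGroup E] [Module R E] {s : Set E} {t : Finset ι} {z : ι → E}
    (hs : Convex R s) (ht : t.Nonempty) (hz : ∀ i ∈ t, z i ∈ s) : (#t : R)⁻¹ • ∑ i ∈ t, z i ∈ s := by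
  have := hs.centerMass_mem (w := fun _ => (1 : R)) (fun _ _ => zero_le_one)
    (by simpa using ht) hz
  simpa [Finset.centerMass] using this

section ClosedGraph

variable {X E : Type*} [TopologicalSpace X] [PseudoMetricSpace E] [ProperSpace E]
  {F : X → Set E} {p : ℕ → X} {p₀ : X} {u : ℕ → E}

theorem exists_mem_tendsto_subseq_of_isSeqClosed_graph
    (hF : IsSeqClosed {q : X × E | q.2 ∈ F q.1}) (hp : Tendsto p atTop (𝓝 p₀))
    (hu : IsBounded (Set.range u)) (hmem : ∀ j, u j ∈ F (p j)) :
    ∃ w ∈ F p₀, ∃ φ : ℕ → ℕ, StrictMono φ ∧ Tendsto (u ∘ φ) atTop (𝓝 w) := by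
  obtain ⟨w, -, φ, hφ, hlim⟩ := tendsto_subseq_of_bounded hu (Set.mem_range_self (f := u))
  refine ⟨w, ?_, φ, hφ, hlim⟩
  exact hF (x := fun n => (p (φ n), u (φ n))) (fun n => hmem (φ n))
    ((hp.comp hφ.tendsto_atTop).prodMk_nhds hlim)

theorem tendsto_infDist_of_isSeqClosed_graph
    (hF : IsSeqClosed {q : X × E | q.2 ∈ F q.1}) (hp : Tendsto p atTop (𝓝 p₀))
    (hu : IsBounded (Set.range u)) (hmem : ∀ j, u j ∈ F (p j)) :
    Tendsto (fun j => infDist (u j) (F p₀)) atTop (𝓝 0) := by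
  refine tendsto_of_subseq_tendsto fun ns hns => ?_
  obtain ⟨w, hw, φ, -, hlim⟩ := exists_mem_tendsto_subseq_of_isSeqClosed_graph hF
    (hp.comp hns) (hu.subset (Set.range_comp_subset_range ns u)) (fun j => hmem (ns j))
  refine ⟨φ, ?_⟩
  rw [← infDist_zero_of_mem hw]
  exact ((continuous_infDist_pt _).tendsto w).comp hlim

end ClosedGraph

theorem exists_seq_mem_tendsto_sub_of_tendsto_infDist {E : Type*} [NormedAddCommGroup E]
    [ProperSpace E] {K : Set E} {u : ℕ → E} (hK : IsClosed K) (hne : K.Nonempty)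
    (hu : Tendsto (fun j => infDist (u j) K) atTop (𝓝 0)) :
    ∃ v : ℕ → E, (∀ j, v j ∈ K) ∧ Tendsto (u - v) atTop (𝓝 0) := by
  choose v hvK hvdist using fun j => hK.exists_infDist_eq_dist hne (u j)
  refine ⟨v, hvK, tendsto_zero_iff_norm_tendsto_zero.2 (hu.congr fun j => ?_)⟩
  rw [hvdist j, dist_eq_norm, Pi.sub_apply]

theorem stmt_10_general {d k : ℕ}
    (h : EuclideanSpace ℝ (Fin d) × EuclideanSpace ℝ (Fin k) →
      Set (EuclideanSpace ℝ (Fin d)))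
    (hh_conv : ∀ p, Convex ℝ (h p))
    (hh_usc : ∀ (p : ℕ → EuclideanSpace ℝ (Fin d) × EuclideanSpace ℝ (Fin k))
      (w : ℕ → EuclideanSpace ℝ (Fin d)) (p₀ : _) (w₀ : _),
      Tendsto p atTop (𝓝 p₀) → Tendsto w atTop (𝓝 w₀) →
      (∀ m, w m ∈ h (p m)) → w₀ ∈ h p₀)
    (u : ℕ → EuclideanSpace ℝ (Fin d)) (C : ℝ) (hu_bd : ∀ j, ‖u j‖ ≤ C)
    (x : ℕ → EuclideanSpace ℝ (Fin d)) (y : ℕ → EuclideanSpace ℝ (Fin k))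
    (x₀ : EuclideanSpace ℝ (Fin d)) (y₀ : EuclideanSpace ℝ (Fin k))
    (hu_mem : ∀ j, u j ∈ h (x j, y j))
    (hx : Tendsto x atTop (𝓝 x₀)) (hy : Tendsto y atTop (𝓝 y₀))
    (N : ℕ → ℕ) (hN : StrictMono N)
    (u₀ : EuclideanSpace ℝ (Fin d))
    (havg : Tendsto
      (fun m => (1 / (N m : ℝ)) • ∑ j ∈ Finset.Icc 1 (N m), u j)
      atTop (𝓝 u₀)) :
    u₀ ∈ h (x₀, y₀) := by
  have hgraph : IsSeqClosed {q : _ × _ | q.2 ∈ h q.1} := fun q q₀ hq hlim =>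
    hh_usc _ _ _ _ hlim.fst_nhds hlim.snd_nhds hq
  have hp : Tendsto (fun j => (x j, y j)) atTop (𝓝 (x₀, y₀)) := hx.prodMk_nhds hy
  have hbdd : IsBounded (Set.range u) :=
    isBounded_iff_forall_norm_le.2 ⟨C, Set.forall_mem_range.2 hu_bd⟩
  have hK_closed : IsClosed (h (x₀, y₀)) :=
    (hgraph.preimage (f := fun e => ((x₀, y₀), e))
      (continuous_const.prodMk continuous_id).seqContinuous).isClosed
  obtain ⟨w, hw, -⟩ := exists_mem_tendsto_subseq_of_isSeqClosed_graph hgraph hp hbdd hu_mem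
  obtain ⟨v, hvK, hv⟩ := exists_seq_mem_tendsto_sub_of_tendsto_infDist hK_closed ⟨w, hw⟩
    (tendsto_infDist_of_isSeqClosed_graph hgraph hp hbdd hu_mem)
  have hvavg : Tendsto (fun m => (1 / (N m : ℝ)) • ∑ j ∈ Icc 1 (N m), v j) atTop (𝓝 u₀) := by
    have := havg.sub (hv.cesaro_smul_Icc.comp hN.tendsto_atTop)
    simpa [← smul_sub, ← sum_sub_distrib] using this
  refine hK_closed.mem_of_tendsto hvavg ?_
  filter_upwards [hN.tendsto_atTop.eventually_ge_atTop 1] with m hm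
  have := (hh_conv (x₀, y₀)).inv_card_smul_sum_mem (nonempty_Icc.2 hm) fun j _ => hvK j
  rwa [Nat.card_Icc, Nat.add_sub_cancel, ← one_div] at this

theorem stmt_10 {d k : ℕ}
    (h : EuclideanSpace ℝ (Fin d) × EuclideanSpace ℝ (Fin k) →
      Set (EuclideanSpace ℝ (Fin d)))
    (hh_ne : ∀ p, (h p).Nonempty) (hh_cpt : ∀ p, IsCompact (h p))
    (hh_conv : ∀ p, Convex ℝ (h p))
    (hh_usc : ∀ (p : ℕ → EuclideanSpace ℝ (Fin d) × EuclideanSpace ℝ (Fin k))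
      (w : ℕ → EuclideanSpace ℝ (Fin d)) (p₀ : _) (w₀ : _),
      Tendsto p atTop (𝓝 p₀) → Tendsto w atTop (𝓝 w₀) →
      (∀ m, w m ∈ h (p m)) → w₀ ∈ h p₀)
    (u : ℕ → EuclideanSpace ℝ (Fin d)) (C : ℝ) (hu_bd : ∀ j, ‖u j‖ ≤ C)
    (x : ℕ → EuclideanSpace ℝ (Fin d)) (y : ℕ → EuclideanSpace ℝ (Fin k))
    (x₀ : EuclideanSpace ℝ (Fin d)) (y₀ : EuclideanSpace ℝ (Fin k))
    (hu_mem : ∀ j, u j ∈ h (x j, y j))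
    (hx : Tendsto x atTop (𝓝 x₀)) (hy : Tendsto y atTop (𝓝 y₀))
    (N : ℕ → ℕ) (hN : StrictMono N)
    (u₀ : EuclideanSpace ℝ (Fin d))
    (havg : Tendsto
      (fun m => (1 / (N m : ℝ)) • ∑ j ∈ Finset.Icc 1 (N m), u j)
      atTop (𝓝 u₀)) :
    u₀ ∈ h (x₀, y₀) :=
  stmt_10_general h hh_conv hh_usc u C hu_bd x y x₀ y₀ hu_mem hx hy N hN u₀ havg
end
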